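/- arXiv:1908.02944 — 3 statements merged into one kernel-verified Lean document; each statement's English description precedes it below -/
import Mathlib

section
/- Weak law of large numbers with varying distributions: for each n ≥ 1 let (V_{n,i})_{i≥1} be i.i.d. nonnegative real random variables and let m_n ≥ 1 be integers with m_n → ∞. If sup_n E[V_{n,1}] < ∞ and for every t > 0, E[V_{n,1} · 1_{V_{n,1} > t·m_n}] → 0 as n → ∞, then E[V_{n,1}] − (1/m_n) ∑_{i=1}^{m_n} V_{n,i} → 0 in probability. -/
open MeasureTheory ProbabilityTheory Filter
open scoped ENNReal

/-- Weak law of large numbers with distributions varying with `n`: if for each `n` the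
`(V n i)_{i ≥ 1}` are i.i.d. nonnegative with uniformly bounded means, `m n → ∞`, and
`E[V n 1 ; V n 1 > t m n] → 0` for each `t > 0`, then
`E[V n 1] - (1/m n) ∑_{i=1}^{m n} V n i → 0` in probability. -/
theorem weak_lln_varying {Ω : Type*} [MeasurableSpace Ω] (P : Measure Ω)
    [IsProbabilityMeasure P]
    (V : ℕ → ℕ → Ω → ℝ)
    (hmeas : ∀ n i, Measurable (V n i))
    (hnonneg : ∀ n i ω, 0 ≤ V n i ω)
    (hindep : ∀ n, iIndepFun (V n) P)
    (hident : ∀ n i j, IdentDistrib (V n i) (V n j) P P)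
    (hint : ∀ n i, Integrable (V n i) P)
    (m : ℕ → ℕ) (hm1 : ∀ n, 1 ≤ m n) (hmtop : Tendsto m atTop atTop)
    (hsup : ∃ C : ℝ, ∀ n, ∫ ω, V n 1 ω ∂P ≤ C)
    (htrunc : ∀ t : ℝ, 0 < t →
      Tendsto (fun n => ∫ ω in {ω | t * (m n : ℝ) < V n 1 ω}, V n 1 ω ∂P)
        atTop (nhds 0)) :
    ∀ δ : ℝ, 0 < δ →
      Tendsto (fun n => P {ω | δ <
          |(∫ ω', V n 1 ω' ∂P) - (1 / (m n : ℝ)) * ∑ i ∈ Finset.Icc 1 (m n), V n i ω|})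
        atTop (nhds 0) := by
  intro δ hδ
  obtain ⟨C, hC⟩ := hsup
  have hC0 : 0 ≤ C := le_trans (integral_nonneg fun ω => hnonneg 0 1 ω) (hC 0)
  rw [ENNReal.tendsto_nhds_zero]
  suffices H : ∀ r : ℝ, 0 < r → ∀ᶠ n in atTop,
      P {ω | δ < |(∫ ω', V n 1 ω' ∂P)
          - (1 / (m n : ℝ)) * ∑ i ∈ Finset.Icc 1 (m n), V n i ω|} ≤ ENNReal.ofReal r by
    intro ε hε
    rcases lt_or_ge ε 1 with hε1 | hε1
    · have h := H ε.toReal (ENNReal.toReal_pos hε.ne' (hε1.trans ENNReal.one_lt_top).ne)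
      exact h.mono fun n hn => hn.trans
        (le_of_eq (ENNReal.ofReal_toReal (hε1.trans ENNReal.one_lt_top).ne))
    · exact (H 1 one_pos).mono fun n hn => hn.trans (by simpa using hε1)
  intro r hr
  set e := r * δ ^ 2 / (8 * (C + 1)) with he_def
  have he : 0 < e := by positivity
  have hkey : 4 * e * C / δ ^ 2 ≤ r / 2 := by
    have h1 : 4 * e * C / δ ^ 2 = r / 2 * (C / (C + 1)) := by
      field_simp [he_def]
      rw [he_def]; field_simp; ring
    rw [h1]
    have h2 : C / (C + 1) ≤ 1 := (div_le_one (by positivity)).2 (by linarith)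
    calc r / 2 * (C / (C + 1)) ≤ r / 2 * 1 :=
          mul_le_mul_of_nonneg_left h2 (by positivity)
      _ = r / 2 := mul_one _
  have hA := htrunc e he
  have hE1 := hA.eventually_lt_const (half_pos hδ)
  have hE2 := hA.eventually_lt_const (show (0:ℝ) < e * (r / 2) by positivity)
  filter_upwards [hE1, hE2] with n h1 h2
  have hM : (0:ℝ) < (m n : ℝ) := by exact_mod_cast hm1 n
  set c := e * (m n : ℝ) with hc_def
  have hc : 0 < c := mul_pos he hM
  set W : ℕ → Ω → ℝ := fun i ω => min (V n i ω) c with hW_def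
  have hWmeas : ∀ i, Measurable (W i) := fun i => (hmeas n i).min measurable_const
  have hWle : ∀ i ω, W i ω ≤ c := fun i ω => min_le_right _ _
  have hWleV : ∀ i ω, W i ω ≤ V n i ω := fun i ω => min_le_left _ _
  have hWnn : ∀ i ω, 0 ≤ W i ω := fun i ω => le_min (hnonneg n i ω) hc.le
  have hWmem : ∀ i, MemLp (W i) 2 P := fun i =>
    MemLp.of_bound (hWmeas i).aestronglyMeasurable c (ae_of_all _ fun ω => by
      rw [Real.norm_eq_abs, abs_of_nonneg (hWnn i ω)]; exact hWle i ω)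
  have hWint : ∀ i, Integrable (W i) P := fun i => (hWmem i).integrable one_le_two
  have hu : Measurable fun x : ℝ => min x c := measurable_id.min measurable_const
  have hWid : ∀ i, IdentDistrib (W i) (W 1) P P := fun i => (hident n i 1).comp hu
  set μn := ∫ ω', V n 1 ω' ∂P with hμ_def
  set ν := ∫ ω, W 1 ω ∂P with hν_def
  set A := ∫ ω in {ω | c < V n 1 ω}, V n 1 ω ∂P with hA_def
  have hs_meas : ∀ i, MeasurableSet {ω | c < V n i ω} :=
    fun i => measurableSet_lt measurable_const (hmeas n i)
  have hA0 : 0 ≤ A := setIntegral_nonneg (hs_meas 1) fun ω _ => hnonneg n 1 ω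
  have hνμ : ν ≤ μn := integral_mono (hWint 1) (hint n 1) (hWleV 1)
  have hμνA : μn - ν ≤ A := by
    have heq : μn - ν = ∫ ω, (V n 1 ω - W 1 ω) ∂P :=
      (integral_sub (hint n 1) (hWint 1)).symm
    have hind : ∀ ω, V n 1 ω - W 1 ω ≤ Set.indicator {ω | c < V n 1 ω} (V n 1) ω := by
      intro ω
      by_cases h : c < V n 1 ω
      · simp only [Set.indicator_apply, Set.mem_setOf_eq, if_pos h]
        have hW1 : W 1 ω = c := min_eq_right h.le
        rw [hW1]; linarith [hc.le]
      · simp only [Set.indicator_apply, Set.mem_setOf_eq, if_neg h]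
        have hW1 : W 1 ω = V n 1 ω := min_eq_left (not_lt.1 h)
        rw [hW1]; simp
    calc μn - ν = ∫ ω, (V n 1 ω - W 1 ω) ∂P := heq
      _ ≤ ∫ ω, Set.indicator {ω | c < V n 1 ω} (V n 1) ω ∂P :=
          integral_mono ((hint n 1).sub (hWint 1))
            ((hint n 1).indicator (hs_meas 1)) hind
      _ = A := integral_indicator (hs_meas 1)
  have hmark : ∀ i, P {ω | c < V n i ω} ≤ ENNReal.ofReal (A / c) := by
    intro i
    have heq : P {ω | c < V n i ω} = P {ω | c < V n 1 ω} := by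
      have h := (hident n i 1).measure_mem_eq (measurableSet_Ioi (a := c))
      simpa [Set.preimage, Set.mem_Ioi] using h
    rw [heq, ENNReal.le_ofReal_iff_toReal_le (measure_ne_top P _) (by positivity),
      le_div_iff₀ hc]
    have h := setIntegral_mono_on
      (integrableOn_const (measure_lt_top P _).ne)
      ((hint n 1).integrableOn) (hs_meas 1)
      (fun ω hω => le_of_lt hω)
    simpa [setIntegral_const, smul_eq_mul, measureReal_def] using h
  -- variance bounds
  have hTmem : MemLp (∑ i ∈ Finset.Icc 1 (m n), W i) 2 P :=
    memLp_finset_sum' _ fun i _ => hWmem i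
  have hvar1 : ∀ i, variance (W i) P = variance (W 1) P := fun i => (hWid i).variance_eq
  have hvarW : variance (W 1) P ≤ c * C := by
    have hb1 : variance (W 1) P ≤ ∫ ω, (W 1 ω) ^ 2 ∂P := by
      simpa using variance_le_expectation_sq (μ := P) (hWmeas 1).aestronglyMeasurable
    have hb2 : ∫ ω, (W 1 ω) ^ 2 ∂P ≤ ∫ ω, c * W 1 ω ∂P := by
      refine integral_mono (hWmem 1).integrable_sq ((hWint 1).const_mul c) fun ω => ?_
      have h3 := hWle 1 ω; have h4 := hWnn 1 ω; nlinarith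
    have hb3 : ∫ ω, c * W 1 ω ∂P = c * ν := integral_const_mul _ _
    have hb4 : ν ≤ C := hνμ.trans (hC n)
    calc variance (W 1) P ≤ c * ν := by linarith
      _ ≤ c * C := mul_le_mul_of_nonneg_left hb4 hc.le
  have hvarT : variance (∑ i ∈ Finset.Icc 1 (m n), W i) P ≤ (m n : ℝ) * (c * C) := by
    rw [IndepFun.variance_sum (fun i _ => hWmem i)
      (fun i _ j _ hij => ((hindep n).indepFun hij).comp hu hu)]
    calc ∑ i ∈ Finset.Icc 1 (m n), variance (W i) P
        ≤ ∑ _i ∈ Finset.Icc 1 (m n), c * C :=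
          Finset.sum_le_sum fun i _ => (hvar1 i) ▸ hvarW
      _ = (m n : ℝ) * (c * C) := by
          rw [Finset.sum_const, Nat.card_Icc, nsmul_eq_mul]; norm_num
  have hET : (∫ ω, (∑ i ∈ Finset.Icc 1 (m n), W i) ω ∂P) = (m n : ℝ) * ν := by
    have h5 : ∫ ω, (∑ i ∈ Finset.Icc 1 (m n), W i) ω ∂P
        = ∑ i ∈ Finset.Icc 1 (m n), ∫ ω, W i ω ∂P := by
      simp only [Finset.sum_apply]
      exact integral_finset_sum _ fun i _ => hWint i
    rw [h5, Finset.sum_congr rfl fun i _ => (hWid i).integral_eq,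
      Finset.sum_const, Nat.card_Icc, nsmul_eq_mul]
    norm_num; exact Or.inl rfl
  have hcheb : P {ω | δ / 2 * (m n : ℝ) ≤
      |(∑ i ∈ Finset.Icc 1 (m n), W i) ω - ∫ ω', (∑ i ∈ Finset.Icc 1 (m n), W i) ω' ∂P|}
      ≤ ENNReal.ofReal (r / 2) := by
    refine (meas_ge_le_variance_div_sq hTmem (by positivity : (0:ℝ) < δ / 2 * (m n : ℝ))).trans
      (ENNReal.ofReal_le_ofReal ?_)
    have hq : (m n : ℝ) * (c * C) / (δ / 2 * (m n : ℝ)) ^ 2 = 4 * e * C / δ ^ 2 := by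
      rw [hc_def]; field_simp; ring
    calc variance (∑ i ∈ Finset.Icc 1 (m n), W i) P / (δ / 2 * (m n : ℝ)) ^ 2
        ≤ (m n : ℝ) * (c * C) / (δ / 2 * (m n : ℝ)) ^ 2 := by gcongr
      _ = 4 * e * C / δ ^ 2 := hq
      _ ≤ r / 2 := hkey
  -- inclusion
  have hincl : {ω | δ < |μn - (1 / (m n : ℝ)) * ∑ i ∈ Finset.Icc 1 (m n), V n i ω|} ⊆
      (⋃ i ∈ Finset.Icc 1 (m n), {ω | c < V n i ω}) ∪
      {ω | δ / 2 * (m n : ℝ) ≤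
        |(∑ i ∈ Finset.Icc 1 (m n), W i) ω - ∫ ω', (∑ i ∈ Finset.Icc 1 (m n), W i) ω' ∂P|} := by
    intro ω hω
    by_cases hb : ∃ i ∈ Finset.Icc 1 (m n), c < V n i ω
    · obtain ⟨i, hi, hci⟩ := hb
      exact Or.inl (Set.mem_biUnion hi hci)
    · push_neg at hb
      right
      have hVW : ∑ i ∈ Finset.Icc 1 (m n), V n i ω = (∑ i ∈ Finset.Icc 1 (m n), W i) ω := by
        rw [Finset.sum_apply]
        exact Finset.sum_congr rfl fun i hi => (min_eq_left (hb i hi)).symm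
      simp only [Set.mem_setOf_eq] at hω ⊢
      rw [hVW] at hω
      rw [hET]
      set t := (∑ i ∈ Finset.Icc 1 (m n), W i) ω with ht_def
      have h3 : |μn - (1 / (m n : ℝ)) * t| ≤ |μn - ν| + |ν - (1 / (m n : ℝ)) * t| := by
        rw [show μn - (1 / (m n : ℝ)) * t
            = (μn - ν) + (ν - (1 / (m n : ℝ)) * t) by ring]
        exact abs_add_le _ _
      have h4 : |μn - ν| ≤ δ / 2 := by
        rw [abs_of_nonneg (by linarith)]
        linarith
      have h5 : δ / 2 < |ν - (1 / (m n : ℝ)) * t| := by linarith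
      have h6 : |t - (m n : ℝ) * ν| = (m n : ℝ) * |ν - (1 / (m n : ℝ)) * t| := by
        rw [← abs_of_pos hM, ← abs_mul, abs_sub_comm]
        congr 1
        field_simp
        rw [abs_of_pos hM]; ring
      rw [h6]
      have := mul_le_mul_of_nonneg_left h5.le hM.le
      linarith
  -- combine
  refine le_trans (measure_mono hincl) (le_trans (measure_union_le _ _) ?_)
  have hU : P (⋃ i ∈ Finset.Icc 1 (m n), {ω | c < V n i ω}) ≤ ENNReal.ofReal (r / 2) := by
    refine le_trans (measure_biUnion_finset_le _ _) ?_
    calc ∑ i ∈ Finset.Icc 1 (m n), P {ω | c < V n i ω}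
        ≤ ∑ _i ∈ Finset.Icc 1 (m n), ENNReal.ofReal (A / c) :=
          Finset.sum_le_sum fun i _ => hmark i
      _ = (m n : ℝ≥0∞) * ENNReal.ofReal (A / c) := by
          rw [Finset.sum_const, Nat.card_Icc, nsmul_eq_mul]; norm_num
      _ = ENNReal.ofReal ((m n : ℝ) * (A / c)) := by
          rw [ENNReal.ofReal_mul (by positivity), ENNReal.ofReal_natCast]
      _ ≤ ENNReal.ofReal (r / 2) := by
          apply ENNReal.ofReal_le_ofReal
          have : (m n : ℝ) * (A / c) = A / e := by
            rw [hc_def]; field_simp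
          rw [this]
          rw [div_le_iff₀ he]
          linarith [h2]
  calc P (⋃ i ∈ Finset.Icc 1 (m n), {ω | c < V n i ω})
      + P {ω | δ / 2 * (m n : ℝ) ≤
          |(∑ i ∈ Finset.Icc 1 (m n), W i) ω - ∫ ω', (∑ i ∈ Finset.Icc 1 (m n), W i) ω' ∂P|}
      ≤ ENNReal.ofReal (r / 2) + ENNReal.ofReal (r / 2) := add_le_add hU hcheb
    _ = ENNReal.ofReal r := by
        rw [← ENNReal.ofReal_add (by positivity) (by positivity)]
        norm_num
end

section
/- Functional law of large numbers: for each n let (V_{n,i})_{i≥1} be i.i.d. nonnegative random variables and ε_n > 0 with ε_n → 0. Assume E[V_{n,1}] → c < ∞ and E[V_{n,1}; V_{n,1} > t/ε_n] → 0 for each t > 0. Define f_n(t) := ε_n ∑_{i=1}^{⌊ε_n^{-1} t⌋} V_{n,i}. Then for each T > 0, sup_{0 ≤ t ≤ T} |c·t − f_n(t)| → 0 in probability. -/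
open MeasureTheory ProbabilityTheory Filter

lemma markov_aux {Ω : Type*} [MeasurableSpace Ω] (P : Measure Ω) [IsProbabilityMeasure P]
    {f : Ω → ℝ} (hf : ∀ ω, 0 ≤ f ω) (hfi : Integrable f P) {b : ℝ} (hb : 0 < b) :
    P {ω | b ≤ f ω} ≤ ENNReal.ofReal ((∫ ω, f ω ∂P) / b) := by
  have h := mul_meas_ge_le_integral_of_nonneg (Filter.Eventually.of_forall hf) hfi b
  have hne : P {ω | b ≤ f ω} ≠ ⊤ := measure_ne_top _ _
  rw [← ENNReal.ofReal_toReal hne]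
  apply ENNReal.ofReal_le_ofReal
  rw [le_div_iff₀ hb, mul_comm]
  exact h

lemma wlln_pointwise {Ω : Type*} [MeasurableSpace Ω] (P : Measure Ω)
    [IsProbabilityMeasure P]
    (V : ℕ → ℕ → Ω → ℝ)
    (hmeas : ∀ n i, Measurable (V n i))
    (hnonneg : ∀ n i ω, 0 ≤ V n i ω)
    (hindep : ∀ n, iIndepFun (V n) P)
    (hident : ∀ n i j, IdentDistrib (V n i) (V n j) P P)
    (hint : ∀ n i, Integrable (V n i) P)
    (ε : ℕ → ℝ) (hεpos : ∀ n, 0 < ε n) (hε0 : Tendsto ε atTop (nhds 0))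
    (c : ℝ)
    (hmean : Tendsto (fun n => ∫ ω, V n 1 ω ∂P) atTop (nhds c))
    (htrunc : ∀ t : ℝ, 0 < t →
      Tendsto (fun n => ∫ ω in {ω | t / ε n < V n 1 ω}, V n 1 ω ∂P)
        atTop (nhds 0))
    (t : ℝ) (ht : 0 ≤ t) (η : ℝ) (hη : 0 < η) :
    Tendsto (fun n => P {ω | η < |c * t - ε n * ∑ i ∈ Finset.Icc 1 (Nat.floor (t / ε n)), V n i ω|})
      atTop (nhds 0) := by
  rcases eq_or_lt_of_le ht with rfl | htpos
  · -- t = 0 case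
    have : ∀ n, {ω : Ω | η < |c * 0 - ε n * ∑ i ∈ Finset.Icc 1 (Nat.floor (0 / ε n)), V n i ω|} = ∅ := by
      intro n
      ext ω
      simp only [Set.mem_setOf_eq, Set.mem_empty_iff_false, iff_false, not_lt]
      rw [zero_div, Nat.floor_zero]
      simp
      linarith
    simp only [this, measure_empty]
    exact tendsto_const_nhds
  -- t > 0 case
  -- the floor count
  set m : ℕ → ℕ := fun n => Nat.floor (t / ε n) with hm
  have hεm_le : ∀ n, ε n * m n ≤ t := by
    intro n
    have h1 : (m n : ℝ) ≤ t / ε n := Nat.floor_le (div_nonneg ht (hεpos n).le)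
    calc ε n * m n ≤ ε n * (t / ε n) := by
          exact mul_le_mul_of_nonneg_left h1 (hεpos n).le
      _ = t := by rw [mul_comm, div_mul_cancel₀ t (hεpos n).ne']
  have hεm_ge : ∀ n, t - ε n ≤ ε n * m n := by
    intro n
    have h1 : t / ε n < m n + 1 := Nat.lt_floor_add_one _
    have h2 : t < ε n * (m n + 1) := by
      rw [← div_lt_iff₀' (hεpos n)]
      exact h1
    nlinarith [hεpos n]
  have hεm_tendsto : Tendsto (fun n => ε n * m n) atTop (nhds t) := by
    exact tendsto_of_tendsto_of_tendsto_of_le_of_le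
      (by simpa using (tendsto_const_nhds (x := t)).sub hε0) tendsto_const_nhds hεm_ge hεm_le
  rw [ENNReal.tendsto_nhds_zero]
  intro ρ' hρ'
  obtain ⟨ρ, hρpos, hρle⟩ : ∃ ρ : ℝ, 0 < ρ ∧ ENNReal.ofReal ρ ≤ ρ' := by
    rcases eq_or_ne ρ' ⊤ with h | h
    · exact ⟨1, one_pos, by simp [h]⟩
    · exact ⟨ρ'.toReal, ENNReal.toReal_pos hρ'.ne' h, by rw [ENNReal.ofReal_toReal h]⟩
  obtain ⟨M, hMub⟩ := hmean.bddAbove_range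
  have hM : ∀ n, ∫ ω, V n 1 ω ∂P ≤ M := fun n => hMub (Set.mem_range_self n)
  have hM0 : 0 ≤ M := le_trans (integral_nonneg (hnonneg 0 1)) (hM 0)
  set a := ρ * η ^ 2 / (36 * t * (M + 1)) with ha
  have hapos : 0 < a := by positivity
  set L : ℕ → ℝ := fun n => a / ε n with hL
  have hLpos : ∀ n, 0 < L n := fun n => div_pos hapos (hεpos n)
  set g : ℕ → ℝ → ℝ := fun n x => if x ≤ L n then x else 0 with hg
  have hgmeas : ∀ n, Measurable (g n) :=
    fun n => Measurable.ite (measurableSet_le measurable_id measurable_const)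
      measurable_id measurable_const
  set W : ℕ → ℕ → Ω → ℝ := fun n i => g n ∘ V n i with hWdef
  have hWnonneg : ∀ n i ω, 0 ≤ W n i ω := by
    intro n i ω
    simp only [hWdef, hg, Function.comp_apply]
    split
    · exact hnonneg n i ω
    · exact le_refl _
  have hWle : ∀ n i ω, W n i ω ≤ L n := by
    intro n i ω
    simp only [hWdef, hg, Function.comp_apply]
    split
    · assumption
    · exact (hLpos n).le
  have hWleV : ∀ n i ω, W n i ω ≤ V n i ω := by
    intro n i ω
    simp only [hWdef, hg, Function.comp_apply]
    split
    · exact le_refl _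
    · exact hnonneg n i ω
  have hWmeas : ∀ n i, Measurable (W n i) := fun n i => (hgmeas n).comp (hmeas n i)
  have hW2 : ∀ n i, MemLp (W n i) 2 P := by
    intro n i
    refine MemLp.mono_exponent ?_ le_top
    refine memLp_top_of_bound (hWmeas n i).aestronglyMeasurable (L n)
      (Filter.Eventually.of_forall fun ω => ?_)
    rw [Real.norm_eq_abs, abs_le]
    exact ⟨by linarith [hWnonneg n i ω, hLpos n], hWle n i ω⟩
  have hWint : ∀ n i, Integrable (W n i) P := fun n i => (hW2 n i).integrable one_le_two
  have hidentW : ∀ n i j, IdentDistrib (W n i) (W n j) P P :=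
    fun n i j => (hident n i j).comp (hgmeas n)
  have hindepW : ∀ n, iIndepFun (W n) P :=
    fun n => (hindep n).comp (fun _ => g n) (fun _ => hgmeas n)
  -- expectation of W
  set tail : ℕ → ℝ := fun n => ∫ ω in {ω | L n < V n 1 ω}, V n 1 ω ∂P with htail
  have htail0 : Tendsto tail atTop (nhds 0) := htrunc a hapos
  have htailnn : ∀ n, 0 ≤ tail n := by
    intro n
    exact setIntegral_nonneg ((measurableSet_lt measurable_const (hmeas n 1))) 
      (fun ω _ => hnonneg n 1 ω)
  have hEW : ∀ n, ∫ ω, W n 1 ω ∂P = (∫ ω, V n 1 ω ∂P) - tail n := by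
    intro n
    have hs : MeasurableSet {ω | V n 1 ω ≤ L n} := measurableSet_le (hmeas n 1) measurable_const
    have h1 : ∫ ω, W n 1 ω ∂P = ∫ ω in {ω | V n 1 ω ≤ L n}, V n 1 ω ∂P := by
      rw [← integral_indicator hs]
      refine integral_congr_ae (Filter.Eventually.of_forall fun ω => ?_)
      simp only [hWdef, hg, Function.comp_apply, Set.indicator_apply, Set.mem_setOf_eq]
    have h2 := integral_add_compl hs (hint n 1)
    have h3 : {ω | V n 1 ω ≤ L n}ᶜ = {ω | L n < V n 1 ω} := by
      ext ω; simp [not_le]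
    rw [h1, ← h2, h3]
    ring
  have hEWnn : ∀ n, 0 ≤ ∫ ω, W n 1 ω ∂P := fun n => integral_nonneg (hWnonneg n 1)
  have hEWleM : ∀ n, ∫ ω, W n 1 ω ∂P ≤ M :=
    fun n => le_trans (integral_mono (hWint n 1) (hint n 1) (hWleV n 1)) (hM n)
  set EW : ℕ → ℝ := fun n => ∫ ω, W n 1 ω ∂P with hEWdef
  have hEW2 : ∀ n, ∫ ω, (W n 1 ω) ^ 2 ∂P ≤ L n * EW n := by
    intro n
    have h1 : ∀ ω, (W n 1 ω) ^ 2 ≤ L n * W n 1 ω := by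
      intro ω
      rw [sq]
      exact mul_le_mul_of_nonneg_right (hWle n 1 ω) (hWnonneg n 1 ω)
    calc ∫ ω, (W n 1 ω) ^ 2 ∂P ≤ ∫ ω, L n * W n 1 ω ∂P :=
          integral_mono (hW2 n 1).integrable_sq ((hWint n 1).const_mul _) h1
      _ = L n * EW n := by rw [integral_const_mul]
  have hVarW : ∀ n, variance (W n 1) P ≤ L n * EW n := by
    intro n
    refine le_trans (variance_le_expectation_sq (hWmeas n 1).aestronglyMeasurable) ?_
    have : P[(W n 1) ^ 2] = ∫ ω, (W n 1 ω) ^ 2 ∂P := by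
      congr 1
    rw [this]
    exact hEW2 n
  -- the partial sums of truncated variables
  set S : ℕ → Ω → ℝ := fun n ω => ∑ i ∈ Finset.Icc 1 (m n), W n i ω with hSdef
  have hfun : ∀ n, S n = ∑ i ∈ Finset.Icc 1 (m n), W n i := by
    intro n; funext ω; rw [Finset.sum_apply]
  have hS2 : ∀ n, MemLp (S n) 2 P := by
    intro n
    rw [hfun n]
    exact memLp_finset_sum' _ (fun i _ => hW2 n i)
  have hES : ∀ n, ∫ ω, S n ω ∂P = (m n : ℝ) * EW n := by
    intro n
    rw [hSdef]
    rw [integral_finset_sum _ (fun i _ => hWint n i)]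
    rw [Finset.sum_congr rfl (fun i _ => (hidentW n i 1).integral_eq)]
    rw [Finset.sum_const, Nat.card_Icc]
    simp [nsmul_eq_mul]
    exact Or.inl rfl
  have hVarS : ∀ n, variance (S n) P ≤ (m n : ℝ) * (L n * EW n) := by
    intro n
    rw [hfun n]
    rw [IndepFun.variance_sum (fun i _ => hW2 n i)
      (fun i _ j _ hij => (hindepW n).indepFun hij)]
    calc ∑ i ∈ Finset.Icc 1 (m n), variance (W n i) P
        = ∑ i ∈ Finset.Icc 1 (m n), variance (W n 1) P :=
          Finset.sum_congr rfl (fun i _ => (hidentW n i 1).variance_eq)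
      _ = (m n : ℝ) * variance (W n 1) P := by
          rw [Finset.sum_const, Nat.card_Icc]; simp [nsmul_eq_mul]
      _ ≤ (m n : ℝ) * (L n * EW n) := by
          exact mul_le_mul_of_nonneg_left (hVarW n) (Nat.cast_nonneg _)
  -- key relation for a
  have haM : 36 * t * (M + 1) * a = ρ * η ^ 2 := by
    rw [ha]; field_simp
  -- Chebyshev bound
  have hcheb : ∀ n, P {ω | η / (3 * ε n) ≤ |S n ω - P[S n]|} ≤ ENNReal.ofReal (ρ / 4) := by
    intro n
    have hεn := hεpos n
    have hb : 0 < η / (3 * ε n) := div_pos hη (by linarith)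
    refine le_trans (meas_ge_le_variance_div_sq (hS2 n) hb) (ENNReal.ofReal_le_ofReal ?_)
    rw [div_le_iff₀ (pow_pos hb 2)]
    refine le_trans (hVarS n) ?_
    have h2 : (m n : ℝ) * (L n * EW n) = a * EW n * (ε n * m n) / ε n ^ 2 := by
      rw [hL]; field_simp
    have h3 : ρ / 4 * (η / (3 * ε n)) ^ 2 = ρ * η ^ 2 / 36 / ε n ^ 2 := by
      field_simp; ring
    rw [h2, h3]
    gcongr ?_ / _
    have hEWnn' : 0 ≤ EW n := hEWnn n
    have hEWleM' : EW n ≤ M := hEWleM n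
    calc a * EW n * (ε n * m n) ≤ a * EW n * t :=
          mul_le_mul_of_nonneg_left (hεm_le n) (mul_nonneg hapos.le hEWnn')
      _ ≤ a * (M + 1) * t :=
          mul_le_mul_of_nonneg_right
            (mul_le_mul_of_nonneg_left (by linarith) hapos.le) htpos.le
      _ ≤ ρ * η ^ 2 / 36 := by linarith [haM]
  -- tail sums
  set C : ℕ → Ω → ℝ := fun n ω => ε n * ∑ i ∈ Finset.Icc 1 (m n), (V n i ω - W n i ω) with hCdef
  have hCnn : ∀ n ω, 0 ≤ C n ω := by
    intro n ω
    refine mul_nonneg (hεpos n).le (Finset.sum_nonneg fun i _ => ?_)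
    linarith [hWleV n i ω]
  have hCint : ∀ n, Integrable (C n) P := fun n =>
    (integrable_finset_sum _ (fun i _ => (hint n i).sub (hWint n i))).const_mul _
  have hEC : ∀ n, ∫ ω, C n ω ∂P = ε n * (m n * tail n) := by
    intro n
    simp only [hCdef]
    rw [integral_const_mul,
      integral_finset_sum (f := fun i ω => V n i ω - W n i ω) _
        (fun i _ => (hint n i).sub (hWint n i))]
    rw [Finset.sum_congr rfl (fun i _ => by
      rw [integral_sub (hint n i) (hWint n i), (hident n i 1).integral_eq,
        (hidentW n i 1).integral_eq, hEW n]
      try ring)]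
    rw [Finset.sum_const, Nat.card_Icc]
    simp [nsmul_eq_mul]
  have hmark : ∀ n, P {ω | η / 3 ≤ C n ω} ≤ ENNReal.ofReal (3 * (t * tail n) / η) := by
    intro n
    refine le_trans (markov_aux P (hCnn n) (hCint n) (show (0:ℝ) < η / 3 by positivity)) ?_
    apply ENNReal.ofReal_le_ofReal
    rw [hEC n, div_div_eq_mul_div]
    gcongr ?_ / _
    nlinarith [hεm_le n, htailnn n, hεpos n,
      mul_le_mul_of_nonneg_right (hεm_le n) (htailnn n)]
  have htails : ∀ᶠ n in atTop, 3 * (t * tail n) / η ≤ ρ / 4 := by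
    have hlim : Tendsto (fun n => 3 * (t * tail n) / η) atTop (nhds 0) := by
      have := ((htail0.const_mul t).const_mul 3).div_const η
      simpa using this
    exact hlim.eventually (eventually_le_nhds (by positivity))
  have hEWt : Tendsto EW atTop (nhds c) := by
    have he : EW = fun n => (∫ ω, V n 1 ω ∂P) - tail n := funext hEW
    rw [he]
    simpa using hmean.sub htail0
  have hB : Tendsto (fun n => c * t - ε n * m n * EW n) atTop (nhds 0) := by
    have h := (tendsto_const_nhds (x := c * t)).sub (hεm_tendsto.mul hEWt)
    have h2 : c * t - t * c = 0 := by ring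
    rw [h2] at h
    exact h
  have hBs : ∀ᶠ n in atTop, |c * t - ε n * m n * EW n| ≤ η / 3 := by
    have habs : Tendsto (fun n => |c * t - ε n * m n * EW n|) atTop (nhds 0) := by
      simpa using hB.abs
    exact habs.eventually (eventually_le_nhds (by positivity))
  filter_upwards [hBs, htails] with n hBn hTn
  have hsub : {ω : Ω | η < |c * t - ε n * ∑ i ∈ Finset.Icc 1 (Nat.floor (t / ε n)), V n i ω|}
      ⊆ {ω | η / (3 * ε n) ≤ |S n ω - P[S n]|} ∪ {ω | η / 3 ≤ C n ω} := by
    intro ω hω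
    simp only [Set.mem_setOf_eq] at hω
    by_contra hnot
    simp only [Set.mem_union, Set.mem_setOf_eq, not_or, not_le] at hnot
    obtain ⟨h1, h2⟩ := hnot
    have hPS : P[S n] = (m n : ℝ) * EW n := hES n
    have hsplit : ∑ i ∈ Finset.Icc 1 (m n), V n i ω
        = S n ω + ∑ i ∈ Finset.Icc 1 (m n), (V n i ω - W n i ω) := by
      rw [hSdef, ← Finset.sum_add_distrib]
      exact Finset.sum_congr rfl fun i _ => by ring
    have h3 : ε n * |S n ω - P[S n]| < η / 3 := by
      have h31 := mul_lt_mul_of_pos_left h1 (hεpos n)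
      have hne : ε n ≠ 0 := (hεpos n).ne'
      have he : ε n * (η / (3 * ε n)) = η / 3 := by
        field_simp
      linarith
    have h4 : c * t - ε n * ∑ i ∈ Finset.Icc 1 (Nat.floor (t / ε n)), V n i ω
        = (c * t - ε n * m n * EW n) + ε n * ((m n : ℝ) * EW n - S n ω) - C n ω := by
      simp only [hCdef]
      rw [show Nat.floor (t / ε n) = m n from rfl, hsplit]
      ring
    have e1 : |ε n * ((m n : ℝ) * EW n - S n ω)| = ε n * |S n ω - P[S n]| := by
      rw [abs_mul, abs_of_pos (hεpos n), hPS, abs_sub_comm]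
    have h5 : |c * t - ε n * ∑ i ∈ Finset.Icc 1 (Nat.floor (t / ε n)), V n i ω|
        ≤ |c * t - ε n * m n * EW n| + ε n * |S n ω - P[S n]| + C n ω := by
      rw [h4]
      calc |(c * t - ε n * m n * EW n) + ε n * ((m n : ℝ) * EW n - S n ω) - C n ω|
          ≤ |(c * t - ε n * m n * EW n) + ε n * ((m n : ℝ) * EW n - S n ω)| + |C n ω| := by
            exact abs_sub _ _
        _ ≤ |c * t - ε n * m n * EW n| + |ε n * ((m n : ℝ) * EW n - S n ω)| + |C n ω| := by
            linarith [abs_add_le (c * t - ε n * m n * EW n) (ε n * ((m n : ℝ) * EW n - S n ω))]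
        _ = |c * t - ε n * m n * EW n| + ε n * |S n ω - P[S n]| + C n ω := by
            rw [e1, abs_of_nonneg (hCnn n ω)]
    linarith
  calc P {ω : Ω | η < |c * t - ε n * ∑ i ∈ Finset.Icc 1 (Nat.floor (t / ε n)), V n i ω|}
      ≤ P ({ω | η / (3 * ε n) ≤ |S n ω - P[S n]|} ∪ {ω | η / 3 ≤ C n ω}) := measure_mono hsub
    _ ≤ P {ω | η / (3 * ε n) ≤ |S n ω - P[S n]|} + P {ω | η / 3 ≤ C n ω} := measure_union_le _ _
    _ ≤ ENNReal.ofReal (ρ / 4) + ENNReal.ofReal (3 * (t * tail n) / η) :=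
        add_le_add (hcheb n) (hmark n)
    _ ≤ ENNReal.ofReal (ρ / 4) + ENNReal.ofReal (ρ / 4) :=
        add_le_add_right (ENNReal.ofReal_le_ofReal hTn) _
    _ ≤ ENNReal.ofReal ρ := by
        rw [← ENNReal.ofReal_add (by positivity) (by positivity)]
        exact ENNReal.ofReal_le_ofReal (by linarith)
    _ ≤ ρ' := hρle

/-- Functional law of large numbers: with `(V n i)_{i ≥ 1}` i.i.d. nonnegative,
`ε n → 0`, `E[V n 1] → c` and `E[V n 1 ; V n 1 > t/ε n] → 0` for each `t > 0`, the
random step functions `f n t = ε n ∑_{i=1}^{⌊t/ε n⌋} V n i` converge to `t ↦ c t`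
uniformly on compacts, in probability. -/
theorem functional_lln {Ω : Type*} [MeasurableSpace Ω] (P : Measure Ω)
    [IsProbabilityMeasure P]
    (V : ℕ → ℕ → Ω → ℝ)
    (hmeas : ∀ n i, Measurable (V n i))
    (hnonneg : ∀ n i ω, 0 ≤ V n i ω)
    (hindep : ∀ n, iIndepFun (V n) P)
    (hident : ∀ n i j, IdentDistrib (V n i) (V n j) P P)
    (hint : ∀ n i, Integrable (V n i) P)
    (ε : ℕ → ℝ) (hεpos : ∀ n, 0 < ε n) (hε0 : Tendsto ε atTop (nhds 0))
    (c : ℝ)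
    (hmean : Tendsto (fun n => ∫ ω, V n 1 ω ∂P) atTop (nhds c))
    (htrunc : ∀ t : ℝ, 0 < t →
      Tendsto (fun n => ∫ ω in {ω | t / ε n < V n 1 ω}, V n 1 ω ∂P)
        atTop (nhds 0)) :
    ∀ T > (0:ℝ), ∀ δ > (0:ℝ),
      Tendsto (fun n => P {ω | ∃ t ∈ Set.Icc (0:ℝ) T,
          δ < |c * t - ε n * ∑ i ∈ Finset.Icc 1 (Nat.floor (t / ε n)), V n i ω|})
        atTop (nhds 0) := by
  intro T hT δ hδ
  have hc0 : 0 ≤ c := ge_of_tendsto' hmean (fun n => integral_nonneg (hnonneg n 1))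
  set K : ℕ := max 1 (Nat.ceil (2 * c * T / δ)) with hKdef
  have hK1 : 1 ≤ K := le_max_left _ _
  have hKpos : (0:ℝ) < K := by exact_mod_cast Nat.lt_of_lt_of_le Nat.zero_lt_one hK1
  set Δ : ℝ := T / K with hΔdef
  have hΔpos : 0 < Δ := div_pos hT hKpos
  have hcΔ : c * Δ ≤ δ / 2 := by
    have h1 : (2 * c * T / δ) ≤ (K : ℝ) := by
      refine le_trans (Nat.le_ceil _) ?_
      exact_mod_cast Nat.le_max_right 1 (Nat.ceil (2 * c * T / δ))
    have h2 : 2 * c * T ≤ (K : ℝ) * δ := by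
      rw [div_le_iff₀ hδ] at h1
      linarith
    rw [hΔdef, ← mul_div_assoc, div_le_iff₀ hKpos]
    linarith
  have hpt : ∀ j : ℕ, Tendsto (fun n => P {ω | δ / 2 <
      |c * ((j : ℝ) * Δ) - ε n * ∑ i ∈ Finset.Icc 1 (Nat.floor (((j : ℝ) * Δ) / ε n)), V n i ω|})
      atTop (nhds 0) := fun j =>
    wlln_pointwise P V hmeas hnonneg hindep hident hint ε hεpos hε0 c hmean htrunc
      ((j : ℝ) * Δ) (mul_nonneg (Nat.cast_nonneg j) hΔpos.le) (δ / 2) (by positivity)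
  have hsub : ∀ n, {ω : Ω | ∃ t ∈ Set.Icc (0:ℝ) T,
        δ < |c * t - ε n * ∑ i ∈ Finset.Icc 1 (Nat.floor (t / ε n)), V n i ω|}
      ⊆ ⋃ j ∈ Finset.range (K + 1), {ω | δ / 2 <
        |c * ((j : ℝ) * Δ) - ε n * ∑ i ∈ Finset.Icc 1 (Nat.floor (((j : ℝ) * Δ) / ε n)), V n i ω|} := by
    intro n ω hω
    obtain ⟨t, ⟨ht0, htT⟩, hgt⟩ := hω
    have fmono : ∀ s u : ℝ, s ≤ u →
        ε n * ∑ i ∈ Finset.Icc 1 (Nat.floor (s / ε n)), V n i ω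
          ≤ ε n * ∑ i ∈ Finset.Icc 1 (Nat.floor (u / ε n)), V n i ω := by
      intro s u hsu
      refine mul_le_mul_of_nonneg_left ?_ (hεpos n).le
      refine Finset.sum_le_sum_of_subset_of_nonneg ?_ (fun i _ _ => hnonneg n i ω)
      refine Finset.Icc_subset_Icc_right (Nat.floor_mono ?_)
      gcongr
      exact (hεpos n).le
    set k : ℕ := min (Nat.floor (t / Δ)) (K - 1) with hkdef
    have hkK : k + 1 ≤ K := by
      have : k ≤ K - 1 := min_le_right _ _
      omega
    have hlow : (k : ℝ) * Δ ≤ t := by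
      have h1 : (k : ℝ) ≤ (Nat.floor (t / Δ) : ℝ) := by
        exact_mod_cast min_le_left _ _
      have h2 : ((Nat.floor (t / Δ) : ℕ) : ℝ) ≤ t / Δ := Nat.floor_le (by positivity)
      calc (k : ℝ) * Δ ≤ (t / Δ) * Δ :=
            mul_le_mul_of_nonneg_right (le_trans h1 h2) hΔpos.le
        _ = t := div_mul_cancel₀ t hΔpos.ne'
    have hhigh : t ≤ ((k : ℝ) + 1) * Δ := by
      rcases le_or_gt (Nat.floor (t / Δ)) (K - 1) with h | h
      · have hk : k = Nat.floor (t / Δ) := min_eq_left h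
        have h3 : t / Δ < (Nat.floor (t / Δ) : ℝ) + 1 := Nat.lt_floor_add_one _
        have h4 : t < ((Nat.floor (t / Δ) : ℝ) + 1) * Δ := by
          rw [← div_lt_iff₀ hΔpos]
          exact h3
        rw [hk]
        exact h4.le
      · have hk : k = K - 1 := min_eq_right h.le
        have h5 : (k : ℝ) + 1 = (K : ℝ) := by
          rw [hk]
          have : (K - 1 : ℕ) + 1 = K := by omega
          exact_mod_cast congrArg (Nat.cast (R := ℝ)) this
        rw [h5]
        have : (K : ℝ) * Δ = T := by
          rw [hΔdef]
          field_simp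
        linarith
    have hkmem : k ∈ Finset.range (K + 1) := Finset.mem_range.2 (by omega)
    have hk1mem : k + 1 ∈ Finset.range (K + 1) := Finset.mem_range.2 (by omega)
    simp only [Set.mem_iUnion, Set.mem_setOf_eq, exists_prop]
    rcases lt_abs.1 hgt with hpos | hneg
    · -- c t - f t > δ : use grid point k
      refine ⟨k, hkmem, ?_⟩
      have e1 : ε n * ∑ i ∈ Finset.Icc 1 (Nat.floor (((k : ℝ) * Δ) / ε n)), V n i ω
          ≤ ε n * ∑ i ∈ Finset.Icc 1 (Nat.floor (t / ε n)), V n i ω := fmono _ _ hlow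
      have e2 : c * t ≤ c * (((k : ℝ) + 1) * Δ) := mul_le_mul_of_nonneg_left hhigh hc0
      have e3 : δ / 2 < c * ((k : ℝ) * Δ)
          - ε n * ∑ i ∈ Finset.Icc 1 (Nat.floor (((k : ℝ) * Δ) / ε n)), V n i ω := by
        nlinarith
      exact lt_of_lt_of_le e3 (le_abs_self _)
    · -- f t - c t > δ : use grid point k+1
      refine ⟨k + 1, hk1mem, ?_⟩
      have e1 : ε n * ∑ i ∈ Finset.Icc 1 (Nat.floor (t / ε n)), V n i ω
          ≤ ε n * ∑ i ∈ Finset.Icc 1 (Nat.floor ((((k : ℕ) + 1 : ℕ) : ℝ) * Δ / ε n)), V n i ω := by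
        refine fmono _ _ ?_
        push_cast
        exact hhigh
      have e2 : c * ((k : ℝ) * Δ) ≤ c * t := mul_le_mul_of_nonneg_left hlow hc0
      have e3 : δ / 2 < ε n * ∑ i ∈ Finset.Icc 1 (Nat.floor ((((k : ℕ) + 1 : ℕ) : ℝ) * Δ / ε n)), V n i ω
          - c * ((((k : ℕ) + 1 : ℕ) : ℝ) * Δ) := by
        push_cast
        push_cast at e1
        nlinarith
      calc δ / 2 < _ := e3
        _ ≤ |_| := by
          rw [abs_sub_comm]
          exact le_abs_self _
  have hbound : ∀ n, P {ω : Ω | ∃ t ∈ Set.Icc (0:ℝ) T,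
        δ < |c * t - ε n * ∑ i ∈ Finset.Icc 1 (Nat.floor (t / ε n)), V n i ω|}
      ≤ ∑ j ∈ Finset.range (K + 1), P {ω | δ / 2 <
        |c * ((j : ℝ) * Δ) - ε n * ∑ i ∈ Finset.Icc 1 (Nat.floor (((j : ℝ) * Δ) / ε n)), V n i ω|} :=
    fun n => le_trans (measure_mono (hsub n)) (measure_biUnion_finset_le _ _)
  have hsum : Tendsto (fun n => ∑ j ∈ Finset.range (K + 1), P {ω | δ / 2 <
      |c * ((j : ℝ) * Δ) - ε n * ∑ i ∈ Finset.Icc 1 (Nat.floor (((j : ℝ) * Δ) / ε n)), V n i ω|})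
      atTop (nhds 0) := by
    have h := tendsto_finset_sum (Finset.range (K + 1)) (fun j _ => hpt j)
    simpa using h
  exact tendsto_of_tendsto_of_tendsto_of_le_of_le tendsto_const_nhds hsum
    (fun n => zero_le) hbound
end

section
/- Convergence of inverse functions: let λ_n, λ : [0,∞) → [0,∞) be continuous, strictly increasing surjections of [0,∞) onto [0,∞). Then λ_n → λ locally uniformly if and only if λ_n^{-1} → λ^{-1} locally uniformly. -/
open Filter

/-- A strictly monotone self-map of `[0,∞)` with a right inverse is continuous on `[0,∞)`. -/
lemma continuousOn_of_strictMonoOn_rightInv (f g : ℝ → ℝ)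
    (hm : StrictMonoOn f (Set.Ici 0))
    (hfmaps : Set.MapsTo f (Set.Ici 0) (Set.Ici 0))
    (hgmaps : Set.MapsTo g (Set.Ici 0) (Set.Ici 0))
    (hfg : ∀ t ≥ (0:ℝ), f (g t) = t) :
    ContinuousOn f (Set.Ici 0) := by
  intro a ha
  have ha' : (0:ℝ) ≤ a := ha
  have hIci : Set.Ici (0:ℝ) ∈ nhdsWithin a (Set.Ici a) :=
    mem_of_superset self_mem_nhdsWithin (Set.Ici_subset_Ici.2 ha')
  have hright : ContinuousWithinAt f (Set.Ici a) a := by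
    refine hm.continuousWithinAt_right_of_exists_between hIci ?_
    intro b hb
    have hb0 : (0:ℝ) ≤ b := le_of_lt (lt_of_le_of_lt (hfmaps ha) hb)
    exact ⟨g b, hgmaps hb0, by rw [hfg b hb0]; exact ⟨hb, le_refl b⟩⟩
  rcases eq_or_lt_of_le ha' with h0 | hapos
  · -- a = 0 : only right continuity matters
    have : Set.Ici (0:ℝ) = Set.Ici a := by rw [h0]
    rw [this]
    exact hright
  · -- a > 0 : we must also know f a > 0
    have hfa0 : (0:ℝ) < f a := by
      rcases eq_or_lt_of_le (Set.mem_Ici.1 (hfmaps ha)) with h | h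
      · exfalso
        have hmem : (a/2) ∈ Set.Ici (0:ℝ) := Set.mem_Ici.2 (by linarith)
        have := hm hmem ha (by linarith)
        have h2 := hfmaps hmem
        simp only [Set.mem_Ici] at h2
        rw [← h] at this
        linarith
      · exact h
    have hIci' : Set.Ici (0:ℝ) ∈ nhdsWithin a (Set.Iic a) :=
      mem_nhdsWithin_of_mem_nhds (Ici_mem_nhds hapos)
    have hleft : ContinuousWithinAt f (Set.Iic a) a := by
      refine hm.continuousWithinAt_left_of_exists_between hIci' ?_
      intro b hb
      have hb' : max b 0 < f a := max_lt hb hfa0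
      have hb0 : (0:ℝ) ≤ max b 0 := le_max_right _ _
      exact ⟨g (max b 0), hgmaps hb0, by rw [hfg _ hb0]; exact ⟨le_max_left _ _, hb'⟩⟩
    have := hleft.union hright
    rw [Set.Iic_union_Ici] at this
    exact this.mono (Set.subset_univ _)

/-- One direction: locally uniform convergence of the functions implies locally uniform
convergence of the inverses. -/
lemma locUnif_inverse_aux (lam : ℕ → ℝ → ℝ) (laml : ℝ → ℝ)
    (inv : ℕ → ℝ → ℝ) (invl : ℝ → ℝ)
    (hcontl : ContinuousOn laml (Set.Ici 0))
    (hmono : ∀ n, StrictMonoOn (lam n) (Set.Ici 0))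
    (hmonol : StrictMonoOn laml (Set.Ici 0))
    (hinvmaps : ∀ n, Set.MapsTo (inv n) (Set.Ici 0) (Set.Ici 0))
    (hinvmapsl : Set.MapsTo invl (Set.Ici 0) (Set.Ici 0))
    (hinv : ∀ n, ∀ t ≥ (0:ℝ), inv n (lam n t) = t ∧ lam n (inv n t) = t)
    (hinvl : ∀ t ≥ (0:ℝ), invl (laml t) = t ∧ laml (invl t) = t)
    (H : ∀ T > (0:ℝ), TendstoUniformlyOn (fun n t => lam n t) laml atTop (Set.Icc 0 T)) :
    ∀ T > (0:ℝ), TendstoUniformlyOn (fun n t => inv n t) invl atTop (Set.Icc 0 T) := by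
  intro T hT
  rw [Metric.tendstoUniformlyOn_iff]
  intro ε hε
  set ε' : ℝ := ε / 2 with hε'def
  have hε'pos : 0 < ε' := by positivity
  set K : ℝ := invl T with hKdef
  have hK0 : (0:ℝ) ≤ K := hinvmapsl (le_of_lt hT)
  have hlK : laml K = T := (hinvl T hT.le).2
  -- minimum of g t = laml (t+ε') - laml t over [0, K]
  have hgcont : ContinuousOn (fun t => laml (t + ε') - laml t) (Set.Icc 0 K) := by
    apply ContinuousOn.sub
    · apply ContinuousOn.comp (hcontl) (by fun_prop)
      intro t ht
      simp only [Set.mem_Ici]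
      have := ht.1
      linarith
    · exact hcontl.mono (fun t ht => ht.1)
  obtain ⟨t₀, ht₀mem, ht₀min⟩ := (isCompact_Icc (a := (0:ℝ)) (b := K)).exists_isMinOn
    ⟨0, le_refl 0, hK0⟩ hgcont
  set δ : ℝ := laml (t₀ + ε') - laml t₀ with hδdef
  have hδpos : 0 < δ := by
    have h01 : t₀ ∈ Set.Ici (0:ℝ) := Set.mem_Ici.2 ht₀mem.1
    have h02 : t₀ + ε' ∈ Set.Ici (0:ℝ) := Set.mem_Ici.2 (by linarith [ht₀mem.1])
    have := hmonol h01 h02 (by linarith)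
    simp only [hδdef]
    linarith
  have hδbound : ∀ u ∈ Set.Icc (0:ℝ) K, δ ≤ laml (u + ε') - laml u := fun u hu => ht₀min hu
  -- uniform convergence on [0, K + ε']
  have hHU := H (K + ε') (by linarith)
  rw [Metric.tendstoUniformlyOn_iff] at hHU
  filter_upwards [hHU (δ / 2) (by positivity)] with n hn
  intro s hs
  have hs0 : (0:ℝ) ≤ s := hs.1
  set t : ℝ := invl s with htdef
  have ht0 : (0:ℝ) ≤ t := hinvmapsl hs0
  have hlt : laml t = s := (hinvl s hs0).2
  have htK : t ≤ K := by
    by_contra h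
    push_neg at h
    have := hmonol (Set.mem_Ici.2 hK0) (Set.mem_Ici.2 ht0) h
    rw [hlt, hlK] at this
    exact absurd hs.2 (not_le.2 this)
  have hinvs0 : (0:ℝ) ≤ inv n s := hinvmaps n hs0
  have hlaminv : lam n (inv n s) = s := (hinv n s hs0).2
  -- upper bound: inv n s < t + ε'
  have hupper : inv n s < t + ε' := by
    have hmem : t + ε' ∈ Set.Icc (0:ℝ) (K + ε') := ⟨by linarith, by linarith⟩
    have h1 := hn (t + ε') hmem
    rw [Real.dist_eq] at h1
    have h2 : δ ≤ laml (t + ε') - laml t := hδbound t ⟨ht0, htK⟩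
    have h3 : s < lam n (t + ε') := by
      have := abs_lt.1 h1
      rw [hlt] at h2
      linarith [this.1, this.2]
    rw [← hlaminv] at h3
    exact (hmono n).lt_iff_lt (Set.mem_Ici.2 hinvs0) (Set.mem_Ici.2 (by linarith)) |>.1 h3
  -- lower bound
  have hlower : t - ε' ≤ inv n s := by
    rcases le_or_gt t ε' with h | h
    · linarith
    · have hmem : t - ε' ∈ Set.Icc (0:ℝ) (K + ε') := ⟨by linarith, by linarith⟩
      have h1 := hn (t - ε') hmem
      rw [Real.dist_eq] at h1
      have h2 : δ ≤ laml (t - ε' + ε') - laml (t - ε') := hδbound (t - ε') ⟨by linarith, by linarith⟩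
      have heq : t - ε' + ε' = t := by ring
      rw [heq, hlt] at h2
      have h3 : lam n (t - ε') < s := by
        have := abs_lt.1 h1
        linarith [this.1, this.2]
      rw [← hlaminv] at h3
      have := (hmono n).lt_iff_lt (Set.mem_Ici.2 (by linarith : (0:ℝ) ≤ t - ε'))
        (Set.mem_Ici.2 hinvs0) |>.1 h3
      linarith
  rw [Real.dist_eq, abs_lt]
  exact ⟨by linarith, by linarith⟩

/-- Convergence of inverse functions: if `lam n, laml` are continuous strictly increasing
bijections of `[0,∞)` onto itself with inverses `inv n, invl`, then `lam n → laml` locally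
uniformly iff `inv n → invl` locally uniformly. -/
theorem locUnif_inverse (lam : ℕ → ℝ → ℝ) (laml : ℝ → ℝ)
    (inv : ℕ → ℝ → ℝ) (invl : ℝ → ℝ)
    (hcont : ∀ n, ContinuousOn (lam n) (Set.Ici 0))
    (hcontl : ContinuousOn laml (Set.Ici 0))
    (hmono : ∀ n, StrictMonoOn (lam n) (Set.Ici 0))
    (hmonol : StrictMonoOn laml (Set.Ici 0))
    (hmaps : ∀ n, Set.MapsTo (lam n) (Set.Ici 0) (Set.Ici 0))
    (hmapsl : Set.MapsTo laml (Set.Ici 0) (Set.Ici 0))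
    (hinvmaps : ∀ n, Set.MapsTo (inv n) (Set.Ici 0) (Set.Ici 0))
    (hinvmapsl : Set.MapsTo invl (Set.Ici 0) (Set.Ici 0))
    (hinv : ∀ n, ∀ t ≥ (0:ℝ), inv n (lam n t) = t ∧ lam n (inv n t) = t)
    (hinvl : ∀ t ≥ (0:ℝ), invl (laml t) = t ∧ laml (invl t) = t) :
    (∀ T > (0:ℝ), TendstoUniformlyOn (fun n t => lam n t) laml atTop (Set.Icc 0 T)) ↔
    (∀ T > (0:ℝ), TendstoUniformlyOn (fun n t => inv n t) invl atTop (Set.Icc 0 T)) := by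
  -- strict monotonicity of the inverses
  have hmonoinv : ∀ n, StrictMonoOn (inv n) (Set.Ici 0) := by
    intro n a ha b hb hab
    by_contra h
    push_neg at h
    have := (hmono n).monotoneOn (hinvmaps n hb) (hinvmaps n ha) h
    rw [(hinv n a ha).2, (hinv n b hb).2] at this
    exact absurd hab (not_lt.2 this)
  have hmonoinvl : StrictMonoOn invl (Set.Ici 0) := by
    intro a ha b hb hab
    by_contra h
    push_neg at h
    have := hmonol.monotoneOn (hinvmapsl hb) (hinvmapsl ha) h
    rw [(hinvl a ha).2, (hinvl b hb).2] at this
    exact absurd hab (not_lt.2 this)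
  -- continuity of invl
  have hcontinvl : ContinuousOn invl (Set.Ici 0) :=
    continuousOn_of_strictMonoOn_rightInv invl laml hmonoinvl hinvmapsl hmapsl
      (fun t ht => (hinvl t ht).1)
  constructor
  · exact locUnif_inverse_aux lam laml inv invl hcontl hmono hmonol hinvmaps hinvmapsl hinv hinvl
  · exact locUnif_inverse_aux inv invl lam laml hcontinvl hmonoinv hmonoinvl hmaps hmapsl
      (fun n t ht => ⟨(hinv n t ht).2, (hinv n t ht).1⟩)
      (fun t ht => ⟨(hinvl t ht).2, (hinvl t ht).1⟩)
end
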